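/- Let G0 be a connected finite simple graph with distinct vertices x and y satisfying d_{G0}(x) ∈ {2, 3} and d_{G0}(y) ∈ {2, 3}. Let P1 = u1u2⋯uk and P2 = v1v2⋯vl (k, l ≥ 1) be paths, vertex-disjoint from each other and from G0. Let G1 be the graph obtained from the disjoint union of G0, P1 and P2 by adding the edges u1x and v1y, and let G2 be obtained from G1 by deleting the edge u1x and adding the edge u1v_l. Then SO(G1) > SO(G2). -/
import Mathlib


open SimpleGraph

/-- Degree of a vertex (instance-free version). -/
noncomputable def gdeg {V : Type*} [Fintype V] (G : SimpleGraph V) (v : V) : ℕ :=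
  (Set.toFinite (G.neighborSet v)).toFinset.card

/-- Sombor index: sum over edges of sqrt(d(u)^2 + d(v)^2). -/
noncomputable def SO {V : Type*} [Fintype V] (G : SimpleGraph V) : ℝ :=
  ∑ e ∈ (Set.toFinite G.edgeSet).toFinset,
    Sym2.lift ⟨fun u v => Real.sqrt ((gdeg G u : ℝ) ^ 2 + (gdeg G v : ℝ) ^ 2),
      fun u v => by dsimp only; rw [add_comm]⟩ e

/-- Reduced Sombor index: sum over edges of sqrt((d(u)-1)^2 + (d(v)-1)^2). -/
noncomputable def SOred {V : Type*} [Fintype V] (G : SimpleGraph V) : ℝ :=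
  ∑ e ∈ (Set.toFinite G.edgeSet).toFinset,
    Sym2.lift ⟨fun u v => Real.sqrt (((gdeg G u : ℝ) - 1) ^ 2 + ((gdeg G v : ℝ) - 1) ^ 2),
      fun u v => by dsimp only; rw [add_comm]⟩ e

lemma gdeg_eq_ncard {V : Type*} [Fintype V] (G : SimpleGraph V) (v : V) :
    gdeg G v = (G.neighborSet v).ncard :=
  (Set.ncard_eq_toFinset_card _ (Set.toFinite _)).symm

lemma sqrt_key {a b c : ℝ} (ha : 3 ≤ a) (hb1 : 1 ≤ b) (hb2 : b ≤ 2) (hc : 2 ≤ c) :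
    Real.sqrt (c^2+4) + Real.sqrt (b^2+4) < Real.sqrt (c^2+1) + Real.sqrt (b^2+a^2) := by
  have hc1 : (0:ℝ) ≤ c^2+1 := by positivity
  have hb4 : (0:ℝ) ≤ b^2+4 := by positivity
  have h1 : Real.sqrt (c^2+4) < Real.sqrt (c^2+1) + 3/5 := by
    rw [show (c^2+4 : ℝ) = (c^2+1) + 3 by ring]
    have hlb : (11:ℝ)/5 ≤ Real.sqrt (c^2+1) := by
      rw [show (11:ℝ)/5 = Real.sqrt ((11/5)^2) by rw [Real.sqrt_sq]; norm_num]
      apply Real.sqrt_le_sqrt; nlinarith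
    rw [show Real.sqrt (c^2+1) + 3/5 = Real.sqrt ((Real.sqrt (c^2+1) + 3/5)^2) from
      (Real.sqrt_sq (by positivity)).symm]
    apply Real.sqrt_lt_sqrt (by positivity)
    have s1 := Real.sq_sqrt hc1
    nlinarith
  have h2 : Real.sqrt (b^2+4) + 3/5 < Real.sqrt (b^2+9) := by
    have hub : Real.sqrt (b^2+4) ≤ Real.sqrt 8 := by
      apply Real.sqrt_le_sqrt; nlinarith
    have h8 : Real.sqrt 8 < 29/10 := by
      rw [show (29:ℝ)/10 = Real.sqrt ((29/10)^2) by rw [Real.sqrt_sq]; norm_num]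
      apply Real.sqrt_lt_sqrt (by norm_num); norm_num
    rw [show Real.sqrt (b^2+4) + 3/5 = Real.sqrt ((Real.sqrt (b^2+4) + 3/5)^2) from
      (Real.sqrt_sq (by positivity)).symm]
    apply Real.sqrt_lt_sqrt (by positivity)
    have s2 := Real.sq_sqrt hb4
    nlinarith
  have h3 : Real.sqrt (b^2+9) ≤ Real.sqrt (b^2+a^2) := by
    apply Real.sqrt_le_sqrt; nlinarith
  linarith

noncomputable def sombor_term {V : Type*} [Fintype V] (G : SimpleGraph V) : Sym2 V → ℝ :=
  Sym2.lift ⟨fun u v => Real.sqrt ((gdeg G u : ℝ) ^ 2 + (gdeg G v : ℝ) ^ 2),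
    fun u v => by dsimp only; rw [add_comm]⟩

lemma sombor_term_mk {V : Type*} [Fintype V] (G : SimpleGraph V) (a b : V) :
    sombor_term G s(a,b) = Real.sqrt ((gdeg G a : ℝ) ^ 2 + (gdeg G b : ℝ) ^ 2) := rfl

lemma ne_of_pair_eq {β : Type*} {a b c d : β} (h : s(a,b) = s(c,d)) (hcd : c ≠ d) : a ≠ b := by
  rintro rfl
  rw [Sym2.eq_iff] at h
  rcases h with ⟨rfl, rfl⟩ | ⟨rfl, rfl⟩ <;> exact hcd rfl

/-- Lemma 2.4 for `SO`. -/
theorem lemma24_SO {α : Type*} [Fintype α] (G₀ : SimpleGraph α)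
    (hconn : G₀.Connected) (x y : α) (hxy : x ≠ y)
    (hdx : gdeg G₀ x = 2 ∨ gdeg G₀ x = 3)
    (hdy : gdeg G₀ y = 2 ∨ gdeg G₀ y = 3)
    (k l : ℕ) (hk : 1 ≤ k) (hl : 1 ≤ l)
    (G₁ G₂ : SimpleGraph (α ⊕ (Fin k ⊕ Fin l)))
    (hG₁ : G₁ = (G₀ ⊕g (pathGraph k ⊕g pathGraph l)) ⊔
      fromEdgeSet {s(Sum.inr (Sum.inl ⟨0, by omega⟩), Sum.inl x),
                   s(Sum.inr (Sum.inr ⟨0, by omega⟩), Sum.inl y)})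
    (hG₂ : G₂ = (G₁.deleteEdges {s(Sum.inr (Sum.inl ⟨0, by omega⟩), Sum.inl x)}) ⊔
      fromEdgeSet {s(Sum.inr (Sum.inl ⟨0, by omega⟩), Sum.inr (Sum.inr ⟨l - 1, by omega⟩))}) :
    SO G₂ < SO G₁ := by
  classical
  set B := G₀ ⊕g (pathGraph k ⊕g pathGraph l) with hB
  set u0 : α ⊕ (Fin k ⊕ Fin l) := Sum.inr (Sum.inl ⟨0, by omega⟩) with hu0
  set w0 : α ⊕ (Fin k ⊕ Fin l) := Sum.inr (Sum.inr ⟨0, by omega⟩) with hw0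
  set wl : α ⊕ (Fin k ⊕ Fin l) := Sum.inr (Sum.inr ⟨l - 1, by omega⟩) with hwl
  set xx : α ⊕ (Fin k ⊕ Fin l) := Sum.inl x with hxx
  set yy : α ⊕ (Fin k ⊕ Fin l) := Sum.inl y with hyy
  have hu0xx : u0 ≠ xx := by simp [hu0, hxx]
  have hu0wl : u0 ≠ wl := by simp [hu0, hwl]
  have hw0yy : w0 ≠ yy := by simp [hw0, hyy]
  have hA1 : ∀ a b, G₁.Adj a b ↔
      (B.Adj a b ∨ s(a,b) = s(u0,xx) ∨ s(a,b) = s(w0,yy)) := by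
    intro a b
    rw [hG₁]
    simp only [sup_adj, fromEdgeSet_adj, Set.mem_insert_iff, Set.mem_singleton_iff]
    constructor
    · tauto
    · rintro (h | h | h)
      · tauto
      · exact Or.inr ⟨Or.inl h, ne_of_pair_eq h hu0xx⟩
      · exact Or.inr ⟨Or.inr h, ne_of_pair_eq h hw0yy⟩
  have hA2 : ∀ a b, G₂.Adj a b ↔
      ((G₁.Adj a b ∧ s(a,b) ≠ s(u0,xx)) ∨ s(a,b) = s(u0,wl)) := by
    intro a b
    rw [hG₂]
    simp only [sup_adj, deleteEdges_adj, fromEdgeSet_adj, Set.mem_singleton_iff]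
    constructor
    · tauto
    · rintro (h | h)
      · tauto
      · exact Or.inr ⟨h, ne_of_pair_eq h hu0wl⟩
  -- neighborhood of wl in G₁ is a single vertex z
  have hNwl : ∃ z : α ⊕ (Fin k ⊕ Fin l), G₁.neighborSet wl = {z} ∧ z ≠ u0 ∧ z ≠ xx ∧ z ≠ wl ∧
      1 < (G₁.neighborSet z).ncard := by
    rcases Nat.lt_or_ge l 2 with hl2 | hl2
    · have hl1 : l = 1 := by omega
      refine ⟨yy, ?_, by simp [hyy, hu0], by simp [hyy, hxx, hxy.symm], by simp [hyy, hwl], ?_⟩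
      swap
      · obtain ⟨w, hw⟩ : (G₀.neighborSet y).Nonempty := by
          apply Set.nonempty_of_ncard_ne_zero
          rw [← gdeg_eq_ncard]
          omega
        refine (Set.one_lt_ncard_iff (Set.toFinite _)).2 ⟨Sum.inl w, w0, ?_, ?_, by simp [hw0]⟩
        · simp only [mem_neighborSet, hA1, hyy, hB]
          left
          simpa using hw
        · simp only [mem_neighborSet, hA1]
          right; right
          exact Sym2.eq_swap
      ext b
      simp only [mem_neighborSet, hA1, Set.mem_singleton_iff]
      rcases b with w | (j | j)
      · simp [hwl, hxx, hyy, hu0, hw0, Sym2.eq_iff, hl1, Fin.ext_iff, hB]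
      · simp [hwl, hxx, hyy, hu0, hw0, Sym2.eq_iff, hB]
      · simp only [hwl, hxx, hyy, hu0, hw0, Sym2.eq_iff, hB]
        simp [pathGraph_adj, Fin.ext_iff]
        omega
    · refine ⟨Sum.inr (Sum.inr ⟨l - 2, by omega⟩), ?_, by simp [hu0], by simp [hxx],
        by simp [hwl, Fin.ext_iff]; omega, ?_⟩
      swap
      · have hmem1 : wl ∈ G₁.neighborSet (Sum.inr (Sum.inr ⟨l - 2, by omega⟩)) := by
          simp only [mem_neighborSet, hA1, hB, hwl]
          left
          simp [pathGraph_adj]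
          omega
        rcases Nat.lt_or_ge l 3 with hl3 | hl3
        · have hl2' : l = 2 := by omega
          have hmem2 : yy ∈ G₁.neighborSet (Sum.inr (Sum.inr ⟨l - 2, by omega⟩)) := by
            simp only [mem_neighborSet, hA1]
            right; right
            simp only [hw0, hyy, Sym2.eq_iff]
            simp [Fin.ext_iff]
            omega
          exact (Set.one_lt_ncard_iff (Set.toFinite _)).2
            ⟨wl, yy, hmem1, hmem2, by simp [hwl, hyy]⟩
        · have hmem2 : (Sum.inr (Sum.inr ⟨l - 3, by omega⟩) : α ⊕ (Fin k ⊕ Fin l)) ∈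
              G₁.neighborSet (Sum.inr (Sum.inr ⟨l - 2, by omega⟩)) := by
            simp only [mem_neighborSet, hA1, hB]
            left
            simp [pathGraph_adj]
            omega
          refine (Set.one_lt_ncard_iff (Set.toFinite _)).2 ⟨wl, _, hmem1, hmem2, ?_⟩
          simp [hwl, Fin.ext_iff]
          omega
      ext b
      simp only [mem_neighborSet, hA1, Set.mem_singleton_iff]
      rcases b with w | (j | j)
      · simp [hwl, hxx, hyy, hu0, hw0, Sym2.eq_iff, hB, Fin.ext_iff]
        omega
      · simp [hwl, hxx, hyy, hu0, hw0, Sym2.eq_iff, hB]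
      · simp only [hwl, hxx, hyy, hu0, hw0, Sym2.eq_iff, hB]
        simp [pathGraph_adj, Fin.ext_iff]
        omega
  obtain ⟨z, hNz, hzu0, hzxx, hzwl, hz2⟩ := hNwl
  have hwlxx : wl ≠ xx := by simp [hwl, hxx]
  have hd1wl : gdeg G₁ wl = 1 := by rw [gdeg_eq_ncard, hNz, Set.ncard_singleton]
  have hAdjwlz : G₁.Adj wl z := by rw [← mem_neighborSet, hNz]; rfl
  have hwl_only : ∀ b, G₁.Adj wl b → b = z := by
    intro b hb; rwa [← mem_neighborSet, hNz, Set.mem_singleton_iff] at hb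
  have hnadj : ¬ G₁.Adj u0 wl := by
    rw [hA1]
    simp [hB, hu0, hwl, hxx, hyy, hw0, Sym2.eq_iff]
  have hAdj1e1 : G₁.Adj u0 xx := (hA1 _ _).mpr (Or.inr (Or.inl rfl))
  have hAdj2e2 : G₂.Adj u0 wl := (hA2 _ _).mpr (Or.inr rfl)
  -- G₂ degree of wl
  have hN2wl : G₂.neighborSet wl = {z, u0} := by
    ext b
    simp only [mem_neighborSet, hA2, Set.mem_insert_iff, Set.mem_singleton_iff]
    constructor
    · rintro (⟨h, -⟩ | h)
      · exact Or.inl (hwl_only b h)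
      · rw [Sym2.eq_iff] at h
        rcases h with ⟨h1, -⟩ | ⟨-, h2⟩
        · exact absurd h1.symm hu0wl
        · exact Or.inr h2
    · rintro (rfl | rfl)
      · refine Or.inl ⟨hAdjwlz, fun hcon => ?_⟩
        rw [Sym2.eq_iff] at hcon
        rcases hcon with ⟨h1, -⟩ | ⟨h1, -⟩
        · exact hu0wl h1.symm
        · exact hwlxx h1
      · exact Or.inr Sym2.eq_swap
  have hd2wl : gdeg G₂ wl = 2 := by
    rw [gdeg_eq_ncard, hN2wl, Set.ncard_pair hzu0]
  have hzdeg : 2 ≤ gdeg G₁ z := by rw [gdeg_eq_ncard]; omega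
  -- degrees of xx
  have hN1xx : G₁.neighborSet xx = Sum.inl '' (G₀.neighborSet x) ∪ {u0} := by
    ext b
    simp only [mem_neighborSet, hA1, Set.mem_union, Set.mem_image, Set.mem_singleton_iff]
    rcases b with w | (j | j)
    · simp [hB, hxx, hu0, hw0, hyy, Sym2.eq_iff, hxy]
    · simp [hB, hxx, hu0, hw0, hyy, Sym2.eq_iff, hxy, Fin.ext_iff]
    · simp [hB, hxx, hu0, hw0, hyy, Sym2.eq_iff, hxy]
  have hd1xx : gdeg G₁ xx = gdeg G₀ x + 1 := by
    rw [gdeg_eq_ncard, hN1xx, Set.ncard_union_eq ?_ (Set.toFinite _) (Set.toFinite _),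
      Set.ncard_image_of_injective _ Sum.inl_injective, Set.ncard_singleton, gdeg_eq_ncard]
    · rw [Set.disjoint_singleton_right]
      simp [hu0]
  have hd2xx : gdeg G₂ xx ≤ gdeg G₁ xx := by
    rw [gdeg_eq_ncard, gdeg_eq_ncard]
    refine Set.ncard_le_ncard ?_ (Set.toFinite _)
    intro b hb
    rw [mem_neighborSet, hA2] at hb
    rcases hb with ⟨h, -⟩ | h
    · exact h
    · exfalso
      rw [Sym2.eq_iff] at h
      rcases h with ⟨h1, -⟩ | ⟨h1, -⟩
      · exact hu0xx h1.symm
      · exact hwlxx h1.symm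
  -- degrees of u0
  have hxxmem : xx ∈ G₁.neighborSet u0 := hAdj1e1
  have hN2u0 : G₂.neighborSet u0 = insert wl (G₁.neighborSet u0 \ {xx}) := by
    ext b
    simp only [mem_neighborSet, hA2, Set.mem_insert_iff, Set.mem_diff,
      Set.mem_singleton_iff]
    have h1 : s(u0, b) = s(u0, xx) ↔ b = xx := by
      rw [Sym2.eq_iff]
      constructor
      · rintro (⟨-, h⟩ | ⟨h, -⟩)
        · exact h
        · exact absurd h hu0xx
      · rintro rfl; exact Or.inl ⟨rfl, rfl⟩
    have h2 : s(u0, b) = s(u0, wl) ↔ b = wl := by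
      rw [Sym2.eq_iff]
      constructor
      · rintro (⟨-, h⟩ | ⟨h, -⟩)
        · exact h
        · exact absurd h hu0wl
      · rintro rfl; exact Or.inl ⟨rfl, rfl⟩
    simp only [ne_eq, h1, h2]
    exact or_comm
  have hwlnotmem : wl ∉ G₁.neighborSet u0 \ {xx} := by
    rintro ⟨h, -⟩
    exact hnadj h
  have hdueq : gdeg G₂ u0 = gdeg G₁ u0 := by
    rw [gdeg_eq_ncard, gdeg_eq_ncard, hN2u0,
      Set.ncard_insert_of_notMem hwlnotmem (Set.toFinite _),
      Set.ncard_diff_singleton_add_one hxxmem (Set.toFinite _)]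
  have hdu1 : 1 ≤ gdeg G₁ u0 := by
    rw [gdeg_eq_ncard]
    have := (Set.ncard_pos (Set.toFinite _)).mpr ⟨xx, hxxmem⟩
    omega
  have honly : ∀ a, G₁.Adj u0 a → a ≠ xx → ∃ j : Fin k, a = Sum.inr (Sum.inl j) ∧ j.val = 1 := by
    intro a ha hne
    rw [hA1] at ha
    rcases ha with h | h | h
    · rcases a with w | (j | j)
      · exfalso; simp [hB, hu0] at h
      · refine ⟨j, rfl, ?_⟩
        simp only [hB, hu0] at h
        have h' : (pathGraph k).Adj ⟨0, by omega⟩ j := by simpa using h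
        rw [pathGraph_adj] at h'
        simp only [Fin.val_mk] at h'
        omega
      · exfalso; simp [hB, hu0] at h
    · exfalso
      rw [Sym2.eq_iff] at h
      rcases h with ⟨-, h2⟩ | ⟨h1, -⟩
      · exact hne h2
      · exact hu0xx h1
    · exfalso
      rw [Sym2.eq_iff] at h
      rcases h with ⟨h1, -⟩ | ⟨h2, -⟩
      · exact absurd h1 (by simp [hu0, hw0])
      · exact absurd h2 (by simp [hu0, hyy])
  have hdu2 : gdeg G₁ u0 ≤ 2 := by
    have hsub : (G₁.neighborSet u0 \ {xx}).ncard ≤ 1 := by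
      rw [Set.ncard_le_one (Set.toFinite _)]
      rintro a ⟨ha, hax⟩ b ⟨hb, hbx⟩
      obtain ⟨ja, rfl, hja⟩ := honly a ha hax
      obtain ⟨jb, rfl, hjb⟩ := honly b hb hbx
      simp only [Sum.inr.injEq, Sum.inl.injEq]
      exact Fin.ext (hja.trans hjb.symm)
    rw [gdeg_eq_ncard, ← Set.ncard_diff_singleton_add_one hxxmem (Set.toFinite _)]
    omega
  -- degrees elsewhere
  have hdeq : ∀ v, v ≠ xx → v ≠ wl → gdeg G₂ v = gdeg G₁ v := by
    intro v hvx hvw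
    by_cases hvu : v = u0
    · subst hvu; exact hdueq
    have hNeq : G₂.neighborSet v = G₁.neighborSet v := by
      ext b
      simp only [mem_neighborSet, hA2]
      constructor
      · rintro (⟨h, -⟩ | h)
        · exact h
        · exfalso
          rw [Sym2.eq_iff] at h
          rcases h with ⟨h1, -⟩ | ⟨h1, -⟩
          · exact hvu h1
          · exact hvw h1
      · intro h
        refine Or.inl ⟨h, fun hcon => ?_⟩
        rw [Sym2.eq_iff] at hcon
        rcases hcon with ⟨h1, -⟩ | ⟨h1, -⟩
        · exact hvu h1
        · exact hvx h1
    rw [gdeg_eq_ncard, gdeg_eq_ncard, hNeq]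
  have hzdeq : gdeg G₂ z = gdeg G₁ z := hdeq z hzxx hzwl
  -- assemble the sums
  have hSOeq : ∀ G : SimpleGraph (α ⊕ (Fin k ⊕ Fin l)),
      SO G = ∑ e ∈ (Set.toFinite G.edgeSet).toFinset, sombor_term G e := fun G => rfl
  rw [hSOeq, hSOeq]
  have hmem1 : ∀ e, e ∈ (Set.toFinite G₁.edgeSet).toFinset ↔ e ∈ G₁.edgeSet :=
    fun e => Set.Finite.mem_toFinset _
  have hmem2 : ∀ e, e ∈ (Set.toFinite G₂.edgeSet).toFinset ↔ e ∈ G₂.edgeSet :=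
    fun e => Set.Finite.mem_toFinset _
  have he1F : s(u0, xx) ∈ (Set.toFinite G₁.edgeSet).toFinset := (hmem1 _).2 hAdj1e1
  have he2F1 : s(u0, wl) ∉ (Set.toFinite G₁.edgeSet).toFinset := fun hc => hnadj ((hmem1 _).1 hc)
  have hF2eq : (Set.toFinite G₂.edgeSet).toFinset
      = insert s(u0, wl) (((Set.toFinite G₁.edgeSet).toFinset).erase s(u0, xx)) := by
    ext e
    induction e using Sym2.ind with
    | _ a b =>
      simp only [hmem2, Finset.mem_insert, Finset.mem_erase, hmem1, mem_edgeSet, hA2 a b, ne_eq]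
      constructor
      · rintro (⟨h, hne⟩ | h)
        · exact Or.inr ⟨hne, h⟩
        · exact Or.inl h
      · rintro (h | ⟨hne, h⟩)
        · exact Or.inr h
        · exact Or.inl ⟨h, hne⟩
  have he2noterase : s(u0, wl) ∉ ((Set.toFinite G₁.edgeSet).toFinset).erase s(u0, xx) :=
    fun hc => he2F1 (Finset.mem_of_mem_erase hc)
  have he3ne1 : s(z, wl) ≠ s(u0, xx) := by
    intro hcon
    rw [Sym2.eq_iff] at hcon
    rcases hcon with ⟨h1, -⟩ | ⟨-, h2⟩
    · exact hzu0 h1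
    · exact hu0wl h2.symm
  have he3erase : s(z, wl) ∈ ((Set.toFinite G₁.edgeSet).toFinset).erase s(u0, xx) :=
    Finset.mem_erase.2 ⟨he3ne1, (hmem1 _).2 ((G₁.mem_edgeSet).2 hAdjwlz.symm)⟩
  have hsum1 : ∑ e ∈ (Set.toFinite G₁.edgeSet).toFinset, sombor_term G₁ e
      = ∑ e ∈ ((((Set.toFinite G₁.edgeSet).toFinset).erase s(u0,xx)).erase s(z,wl)),
          sombor_term G₁ e
        + sombor_term G₁ s(z,wl) + sombor_term G₁ s(u0,xx) := by
    rw [Finset.sum_erase_add _ _ he3erase, Finset.sum_erase_add _ _ he1F]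
  have hsum2 : ∑ e ∈ (Set.toFinite G₂.edgeSet).toFinset, sombor_term G₂ e
      = ∑ e ∈ ((((Set.toFinite G₁.edgeSet).toFinset).erase s(u0,xx)).erase s(z,wl)),
          sombor_term G₂ e
        + sombor_term G₂ s(z,wl) + sombor_term G₂ s(u0,wl) := by
    rw [hF2eq, Finset.sum_insert he2noterase, ← Finset.sum_erase_add _ _ he3erase]
    ring
  rw [hsum1, hsum2]
  have hptwise : ∑ e ∈ ((((Set.toFinite G₁.edgeSet).toFinset).erase s(u0,xx)).erase s(z,wl)),
        sombor_term G₂ e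
      ≤ ∑ e ∈ ((((Set.toFinite G₁.edgeSet).toFinset).erase s(u0,xx)).erase s(z,wl)),
        sombor_term G₁ e := by
    refine Finset.sum_le_sum ?_
    intro e he
    have hne3 : e ≠ s(z, wl) := (Finset.mem_erase.1 he).1
    have he' := Finset.mem_of_mem_erase he
    have hne1 : e ≠ s(u0, xx) := (Finset.mem_erase.1 he').1
    have heE : e ∈ G₁.edgeSet := (hmem1 _).1 (Finset.mem_of_mem_erase he')
    have key : ∀ c d : α ⊕ (Fin k ⊕ Fin l), G₁.Adj c d → s(c,d) ≠ s(z,wl) →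
        gdeg G₂ c ≤ gdeg G₁ c := by
      intro c d hcd hne
      by_cases hcx : c = xx
      · subst hcx; exact hd2xx
      by_cases hcw : c = wl
      · exfalso
        subst hcw
        have hdz : d = z := hwl_only d hcd
        subst hdz
        exact hne Sym2.eq_swap
      · exact le_of_eq (hdeq c hcx hcw)
    revert hne3 hne1 heE
    induction e using Sym2.ind with
    | _ a b =>
      intro hne3 hne1 heE
      have hadj : G₁.Adj a b := (G₁.mem_edgeSet).1 heE
      have h1 := key a b hadj hne3
      have h2 := key b a hadj.symm (by rw [Sym2.eq_swap]; exact hne3)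
      have c1 : ((gdeg G₂ a : ℕ) : ℝ) ≤ ((gdeg G₁ a : ℕ) : ℝ) := Nat.cast_le.mpr h1
      have c2 : ((gdeg G₂ b : ℕ) : ℝ) ≤ ((gdeg G₁ b : ℕ) : ℝ) := Nat.cast_le.mpr h2
      have n1 : (0:ℝ) ≤ ((gdeg G₂ a : ℕ) : ℝ) := Nat.cast_nonneg _
      have n2 : (0:ℝ) ≤ ((gdeg G₂ b : ℕ) : ℝ) := Nat.cast_nonneg _
      simp only [sombor_term_mk]
      apply Real.sqrt_le_sqrt
      nlinarith
  have hkey : sombor_term G₂ s(z,wl) + sombor_term G₂ s(u0,wl)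
      < sombor_term G₁ s(z,wl) + sombor_term G₁ s(u0,xx) := by
    simp only [sombor_term_mk, hd2wl, hd1wl, hzdeq, hdueq, hd1xx]
    have hx3 : (3:ℝ) ≤ ((gdeg G₀ x : ℕ) : ℝ) + 1 := by
      rcases hdx with h | h <;> rw [h] <;> norm_num
    have hb1 : (1:ℝ) ≤ ((gdeg G₁ u0 : ℕ) : ℝ) := by exact_mod_cast hdu1
    have hb2 : ((gdeg G₁ u0 : ℕ) : ℝ) ≤ 2 := by exact_mod_cast hdu2
    have hc2 : (2:ℝ) ≤ ((gdeg G₁ z : ℕ) : ℝ) := by exact_mod_cast hzdeg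
    have hmain := sqrt_key hx3 hb1 hb2 hc2
    push_cast
    norm_num
    convert hmain using 4 <;> norm_num <;> ring
  linarith [hptwise, hkey]
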